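/- For the chain X̃ started at k ≥ 2, the probability of returning to k (i.e. hitting k at some time ≥ 1) equals (6k−1)/(3(2k+3)). -/
import Mathlib


open Filter Topology

noncomputable def p (x : ℕ) : ℝ :=
  ((x : ℝ) + 4) * (2 * x + 5) / (3 * ((x : ℝ) + 2) * (2 * x + 3))

noncomputable def r (x : ℕ) : ℝ :=
  (x : ℝ) * ((x : ℝ) + 3) / (3 * ((x : ℝ) + 1) * ((x : ℝ) + 2))

noncomputable def q (x : ℕ) : ℝ :=
  ((x : ℝ) - 1) * (2 * x + 1) / (3 * ((x : ℝ) + 1) * (2 * x + 3))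

/-- `H k n x` is the probability that the chain `X̃` started at `x` hits `k`
within `n` steps. -/
noncomputable def H (k : ℕ) : ℕ → ℕ → ℝ
  | 0, x => if x = k then 1 else 0
  | n + 1, x =>
    if x = k then 1 else p x * H k n (x + 1) + r x * H k n x + q x * H k n (x - 1)

lemma p_pos (x : ℕ) : 0 < p x := by unfold p; positivity

lemma p_nonneg (x : ℕ) : 0 ≤ p x := (p_pos x).le

lemma r_nonneg (x : ℕ) : 0 ≤ r x := by unfold r; positivity

lemma q_nonneg {x : ℕ} (hx : 1 ≤ x) : 0 ≤ q x := by
  have h1 : (1:ℝ) ≤ (x:ℝ) := by exact_mod_cast hx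
  unfold q
  apply div_nonneg
  · nlinarith
  · positivity

lemma q_one : q 1 = 0 := by norm_num [q]

lemma p_le_one {x : ℕ} (hx : 1 ≤ x) : p x ≤ 1 := by
  have h1 : (1:ℝ) ≤ (x:ℝ) := by exact_mod_cast hx
  unfold p
  rw [div_le_one (by positivity)]
  nlinarith

lemma pqr_sum (x : ℕ) : p x + r x + q x = 1 := by
  have h0 : (0:ℝ) ≤ (x:ℝ) := x.cast_nonneg
  unfold p q r
  field_simp
  ring

noncomputable def S (x : ℕ) : ℝ :=
  ((x : ℝ) * ((x:ℝ) + 1) * ((x:ℝ) + 2) * ((x:ℝ) + 3) * (2 * (x:ℝ) + 3))⁻¹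

lemma S_pos {x : ℕ} (hx : 1 ≤ x) : 0 < S x := by
  have h1 : (1:ℝ) ≤ (x:ℝ) := by exact_mod_cast hx
  unfold S
  positivity

lemma S_succ_lt {x : ℕ} (hx : 1 ≤ x) : S (x + 1) < S x := by
  have h1 : (1:ℝ) ≤ (x:ℝ) := by exact_mod_cast hx
  unfold S
  rw [inv_lt_inv₀ (by positivity) (by positivity)]
  push_cast
  have A : (0:ℝ) < ((x:ℝ)+1)*((x:ℝ)+2)*((x:ℝ)+3) := by positivity
  have B : (x:ℝ)*(2*(x:ℝ)+3) < ((x:ℝ)+4)*(2*(x:ℝ)+5) := by nlinarith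
  nlinarith [mul_lt_mul_of_pos_left B A]

lemma S_anti {x y : ℕ} (hx : 1 ≤ x) (hxy : x ≤ y) : S y ≤ S x := by
  induction y, hxy using Nat.le_induction with
  | base => exact le_refl _
  | succ n hn ih => exact le_trans (S_succ_lt (le_trans hx hn)).le ih

lemma S_harm {x : ℕ} (hx : 2 ≤ x) :
    p x * S (x + 1) + r x * S x + q x * S (x - 1) = S x := by
  obtain ⟨y, rfl⟩ : ∃ y, x = y + 2 := ⟨x - 2, by omega⟩
  have h0 : (0:ℝ) ≤ (y:ℝ) := y.cast_nonneg
  show p (y+2) * S (y+3) + r (y+2) * S (y+2) + q (y+2) * S (y+1) = S (y+2)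
  unfold p q r S
  push_cast
  field_simp
  ring

lemma H_self (k n : ℕ) : H k n k = 1 := by
  cases n <;> simp [H]

lemma H_rec (k n : ℕ) {x : ℕ} (hx : x ≠ k) :
    H k (n + 1) x = p x * H k n (x + 1) + r x * H k n x + q x * H k n (x - 1) := by
  simp [H, hx]

lemma H_zero_nonneg (k x : ℕ) : 0 ≤ H k 0 x := by
  simp only [H]; split <;> norm_num

lemma H_zero_le_one (k x : ℕ) : H k 0 x ≤ 1 := by
  simp only [H]; split <;> norm_num

lemma H_nonneg (k : ℕ) : ∀ n x, 1 ≤ x → 0 ≤ H k n x := by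
  intro n
  induction n with
  | zero => intro x _; exact H_zero_nonneg k x
  | succ n ih =>
    intro x hx
    by_cases hxk : x = k
    · rw [hxk, H_self]; norm_num
    · rw [H_rec k n hxk]
      have h1 : 0 ≤ p x * H k n (x + 1) :=
        mul_nonneg (p_nonneg x) (ih (x+1) (by omega))
      have h2 : 0 ≤ r x * H k n x := mul_nonneg (r_nonneg x) (ih x hx)
      have h3 : 0 ≤ q x * H k n (x - 1) := by
        rcases Nat.lt_or_ge x 2 with h | h
        · have : x = 1 := by omega
          simp [this, q_one]
        · exact mul_nonneg (q_nonneg (by omega)) (ih (x-1) (by omega))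
      linarith

lemma H_le_one (k : ℕ) : ∀ n x, 1 ≤ x → H k n x ≤ 1 := by
  intro n
  induction n with
  | zero => intro x _; exact H_zero_le_one k x
  | succ n ih =>
    intro x hx
    by_cases hxk : x = k
    · rw [hxk, H_self]
    · rw [H_rec k n hxk]
      have h1 : p x * H k n (x + 1) ≤ p x * 1 :=
        mul_le_mul_of_nonneg_left (ih (x+1) (by omega)) (p_nonneg x)
      have h2 : r x * H k n x ≤ r x * 1 :=
        mul_le_mul_of_nonneg_left (ih x hx) (r_nonneg x)
      have h3 : q x * H k n (x - 1) ≤ q x * 1 := by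
        rcases Nat.lt_or_ge x 2 with h | h
        · have : x = 1 := by omega
          simp [this, q_one]
        · exact mul_le_mul_of_nonneg_left (ih (x-1) (by omega)) (q_nonneg (by omega))
      have := pqr_sum x
      linarith

lemma H_mono (k : ℕ) : ∀ n x, 1 ≤ x → H k n x ≤ H k (n + 1) x := by
  intro n
  induction n with
  | zero =>
    intro x hx
    by_cases hxk : x = k
    · rw [hxk, H_self, H_self]
    · rw [H_rec k 0 hxk]
      have h1 : 0 ≤ p x * H k 0 (x + 1) := mul_nonneg (p_nonneg x) (H_zero_nonneg k _)
      have h2 : 0 ≤ r x * H k 0 x := mul_nonneg (r_nonneg x) (H_zero_nonneg k _)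
      have h3 : 0 ≤ q x * H k 0 (x - 1) := by
        rcases Nat.lt_or_ge x 2 with h | h
        · have : x = 1 := by omega
          simp [this, q_one]
        · exact mul_nonneg (q_nonneg (by omega)) (H_zero_nonneg k _)
      have : H k 0 x = 0 := by simp [H, hxk]
      rw [this]; linarith
  | succ n ih =>
    intro x hx
    by_cases hxk : x = k
    · rw [hxk, H_self, H_self]
    · rw [H_rec k n hxk, H_rec k (n+1) hxk]
      have h1 : p x * H k n (x + 1) ≤ p x * H k (n+1) (x + 1) :=
        mul_le_mul_of_nonneg_left (ih (x+1) (by omega)) (p_nonneg x)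
      have h2 : r x * H k n x ≤ r x * H k (n+1) x :=
        mul_le_mul_of_nonneg_left (ih x hx) (r_nonneg x)
      have h3 : q x * H k n (x - 1) ≤ q x * H k (n+1) (x - 1) := by
        rcases Nat.lt_or_ge x 2 with h | h
        · have : x = 1 := by omega
          simp [this, q_one]
        · exact mul_le_mul_of_nonneg_left (ih (x-1) (by omega)) (q_nonneg (by omega))
      linarith

noncomputable def g (k x : ℕ) : ℝ := if x ≤ k then 1 else S x / S k

lemma g_nonneg {k : ℕ} (hk : 1 ≤ k) (x : ℕ) : 0 ≤ g k x := by
  unfold g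
  split
  · norm_num
  · next h =>
    exact div_nonneg (S_pos (x := x) (by omega)).le (S_pos hk).le

lemma g_le_one {k : ℕ} (hk : 1 ≤ k) (x : ℕ) : g k x ≤ 1 := by
  unfold g
  split
  · exact le_refl _
  · next h =>
    rw [div_le_one (S_pos hk)]
    exact S_anti hk (by omega)

lemma g_harm {k : ℕ} (hk : 2 ≤ k) {x : ℕ} (hx : 1 ≤ x) (hxk : x ≠ k) :
    p x * g k (x + 1) + r x * g k x + q x * g k (x - 1) = g k x := by
  rcases Nat.lt_or_ge x k with h | h
  · have e1 : g k (x+1) = 1 := by unfold g; rw [if_pos (by omega)]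
    have e2 : g k x = 1 := by unfold g; rw [if_pos (by omega)]
    have e3 : g k (x-1) = 1 := by unfold g; rw [if_pos (by omega)]
    rw [e1, e2, e3]
    have := pqr_sum x
    linarith
  · have hxk2 : k < x := by omega
    have hSk := S_pos (x := k) (by omega)
    have e1 : g k (x+1) = S (x+1) / S k := by unfold g; rw [if_neg (by omega)]
    have e2 : g k x = S x / S k := by unfold g; rw [if_neg (by omega)]
    have e3 : g k (x-1) = S (x-1) / S k := by
      unfold g
      rcases Nat.lt_or_ge (x-1) k with h2 | h2
      · have : x - 1 = k := by omega
        rw [if_pos (by omega), this]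
        field_simp
      · rcases Nat.eq_or_lt_of_le h2 with h3 | h3
        · rw [if_pos (by omega), ← h3]
          field_simp
        · rw [if_neg (by omega)]
    rw [e1, e2, e3]
    have hh := S_harm (x := x) (by omega)
    field_simp
    linarith [hh]

lemma H_le_g {k : ℕ} (hk : 2 ≤ k) : ∀ n x, 1 ≤ x → H k n x ≤ g k x := by
  intro n
  induction n with
  | zero =>
    intro x hx
    by_cases hxk : x = k
    · subst hxk; rw [H_self]; unfold g; rw [if_pos le_rfl]
    · have : H k 0 x = 0 := by simp [H, hxk]
      rw [this]; exact g_nonneg (by omega) x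
  | succ n ih =>
    intro x hx
    by_cases hxk : x = k
    · subst hxk; rw [H_self]; unfold g; rw [if_pos le_rfl]
    · rw [H_rec k n hxk, ← g_harm hk hx hxk]
      have h1 : p x * H k n (x + 1) ≤ p x * g k (x + 1) :=
        mul_le_mul_of_nonneg_left (ih (x+1) (by omega)) (p_nonneg x)
      have h2 : r x * H k n x ≤ r x * g k x :=
        mul_le_mul_of_nonneg_left (ih x hx) (r_nonneg x)
      have h3 : q x * H k n (x - 1) ≤ q x * g k (x - 1) := by
        rcases Nat.lt_or_ge x 2 with h | h
        · have : x = 1 := by omega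
          simp [this, q_one]
        · exact mul_le_mul_of_nonneg_left (ih (x-1) (by omega)) (q_nonneg (by omega))
      linarith

lemma contraction (u : ℕ → ℕ → ℝ) (lo b : ℕ) (hlo : 1 ≤ lo) (hlob : lo < b)
    (hqe : q lo = 0 ∨ ∀ n, u n (lo - 1) = 0)
    (hbd : ∀ n, u n b = 0)
    (hrec : ∀ n x, lo ≤ x → x < b →
      u (n+1) x = p x * u n (x+1) + r x * u n x + q x * u n (x-1))
    (h0 : ∀ x, lo ≤ x → x ≤ b → u 0 x ≤ 1) :
    ∀ m n x, lo ≤ x → x ≤ b → m * (b - lo) ≤ n →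
      u n x ≤ (1 - ∏ i ∈ Finset.Ico lo b, p i) ^ m := by
  set ε := ∏ i ∈ Finset.Ico lo b, p i with hεdef
  have hε0 : 0 < ε := Finset.prod_pos (fun i _ => p_pos i)
  have hε1 : ε ≤ 1 :=
    Finset.prod_le_one (fun i _ => (p_pos i).le)
      (fun i hi => p_le_one (le_trans hlo (Finset.mem_Ico.mp hi).1))
  have persist : ∀ (c : ℝ), 0 ≤ c → ∀ n₀, (∀ x, lo ≤ x → x ≤ b → u n₀ x ≤ c) →
      ∀ n, n₀ ≤ n → ∀ x, lo ≤ x → x ≤ b → u n x ≤ c := by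
    intro c hc n₀ hbase n hn
    induction n, hn using Nat.le_induction with
    | base => exact hbase
    | succ n hn ih =>
      intro x hx1 hx2
      rcases Nat.eq_or_lt_of_le hx2 with hxb | hxb
      · rw [hxb, hbd]; exact hc
      · rw [hrec n x hx1 hxb]
        have h1 : p x * u n (x+1) ≤ p x * c :=
          mul_le_mul_of_nonneg_left (ih (x+1) (by omega) (by omega)) (p_nonneg x)
        have h2 : r x * u n x ≤ r x * c :=
          mul_le_mul_of_nonneg_left (ih x hx1 hx2) (r_nonneg x)
        have h3 : q x * u n (x-1) ≤ q x * c := by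
          rcases Nat.eq_or_lt_of_le hx1 with hxlo | hxlo
          · rcases hqe with hq | hu
            · rw [← hxlo, hq]; simp
            · rw [← hxlo, hu n, mul_zero]
              exact mul_nonneg (q_nonneg hlo) hc
          · exact mul_le_mul_of_nonneg_left (ih (x-1) (by omega) (by omega))
              (q_nonneg (by omega))
        have hsum := pqr_sum x
        nlinarith [h1, h2, h3]
  have sweep : ∀ (c : ℝ), 0 ≤ c → ∀ n₀,
      (∀ n, n₀ ≤ n → ∀ x, lo ≤ x → x ≤ b → u n x ≤ c) →
      ∀ d, d ≤ b - lo → ∀ n, n₀ + d ≤ n →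
        u n (b - d) ≤ (1 - ∏ i ∈ Finset.Ico (b - d) b, p i) * c := by
    intro c hc n₀ hall d
    induction d with
    | zero =>
      intro _ n hn
      simp only [Nat.sub_zero, Finset.Ico_self, Finset.prod_empty]
      rw [hbd n]
      norm_num
    | succ d ihd =>
      intro hd n hn
      obtain ⟨m, rfl⟩ : ∃ m, n = m + 1 := ⟨n - 1, by omega⟩
      have hx1 : lo ≤ b - (d+1) := by omega
      have hxb : b - (d+1) < b := by omega
      set x := b - (d+1) with hxdef
      have hxsucc : x + 1 = b - d := by omega
      rw [hrec m x hx1 hxb]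
      set P' := ∏ i ∈ Finset.Ico (b - d) b, p i with hP'def
      have h1 : p x * u m (x+1) ≤ p x * ((1 - P') * c) := by
        apply mul_le_mul_of_nonneg_left _ (p_nonneg x)
        rw [hxsucc]
        exact ihd (by omega) m (by omega)
      have h2 : r x * u m x ≤ r x * c :=
        mul_le_mul_of_nonneg_left (hall m (by omega) x hx1 hxb.le) (r_nonneg x)
      have h3 : q x * u m (x-1) ≤ q x * c := by
        rcases Nat.eq_or_lt_of_le hx1 with hxlo | hxlo
        · rcases hqe with hq | hu
          · rw [← hxlo, hq]; simp
          · rw [← hxlo, hu m, mul_zero]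
            exact mul_nonneg (q_nonneg hlo) hc
        · exact mul_le_mul_of_nonneg_left
            (hall m (by omega) (x-1) (by omega) (by omega)) (q_nonneg (by omega))
      have hprod : ∏ i ∈ Finset.Ico x b, p i = p x * P' := by
        rw [hP'def, ← hxsucc]
        exact Finset.prod_eq_prod_Ico_succ_bot hxb _
      have hkey : p x * ((1 - P') * c) + r x * c + q x * c = (1 - p x * P') * c := by
        linear_combination c * (pqr_sum x)
      rw [hprod]
      linarith [h1, h2, h3]
  intro m
  induction m with
  | zero =>
    intro n x hx1 hx2 _
    simpa using persist 1 zero_le_one 0 h0 n (Nat.zero_le n) x hx1 hx2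
  | succ m ihm =>
    intro n x hx1 hx2 hn
    have hc : (0:ℝ) ≤ (1-ε)^m := pow_nonneg (by linarith) m
    have hn' : m * (b - lo) + (b - x) ≤ n := by
      have h1 : m * (b-lo) + (b-x) ≤ m * (b-lo) + (b-lo) := Nat.add_le_add_left (by omega) _
      have h2 : m * (b-lo) + (b-lo) = (m+1) * (b-lo) := (Nat.succ_mul m (b-lo)).symm
      exact le_trans (h1.trans_eq h2) hn
    have hsw := sweep ((1-ε)^m) hc (m * (b - lo))
      (fun n' hn' x' h1 h2 => ihm n' x' h1 h2 hn') (b - x) (by omega) n hn'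
    have hbx : b - (b - x) = x := by omega
    rw [hbx] at hsw
    have hPx : ε ≤ ∏ i ∈ Finset.Ico x b, p i := by
      have hsplit := Finset.prod_Ico_consecutive p hx1 hx2
      have hle1 : ∏ i ∈ Finset.Ico lo x, p i ≤ 1 :=
        Finset.prod_le_one (fun i _ => (p_pos i).le)
          (fun i hi => p_le_one (le_trans hlo (Finset.mem_Ico.mp hi).1))
      have hpos : (0:ℝ) < ∏ i ∈ Finset.Ico x b, p i := Finset.prod_pos (fun i _ => p_pos i)
      calc ε = (∏ i ∈ Finset.Ico lo x, p i) * ∏ i ∈ Finset.Ico x b, p i := hsplit.symm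
        _ ≤ 1 * ∏ i ∈ Finset.Ico x b, p i := mul_le_mul_of_nonneg_right hle1 hpos.le
        _ = _ := one_mul _
    calc u n x ≤ (1 - ∏ i ∈ Finset.Ico x b, p i) * (1-ε)^m := hsw
      _ ≤ (1 - ε) * (1-ε)^m := mul_le_mul_of_nonneg_right (by linarith) hc
      _ = (1-ε)^(m+1) := by ring

noncomputable def Hb (k N : ℕ) : ℕ → ℕ → ℝ
  | 0, x => if x = k then 1 else 0
  | n + 1, x =>
    if x = k then 1 else if N ≤ x then 0 else
      p x * Hb k N n (x + 1) + r x * Hb k N n x + q x * Hb k N n (x - 1)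

noncomputable def Abb (k N : ℕ) : ℕ → ℕ → ℝ
  | 0, x => if x = k then 0 else if N ≤ x then 1 else 0
  | n + 1, x =>
    if x = k then 0 else if N ≤ x then 1 else
      p x * Abb k N n (x + 1) + r x * Abb k N n x + q x * Abb k N n (x - 1)

lemma Hb_self (k N n : ℕ) : Hb k N n k = 1 := by cases n <;> simp [Hb]

lemma Abb_self (k N n : ℕ) : Abb k N n k = 0 := by cases n <;> simp [Abb]

lemma Hb_top {k N : ℕ} (hkN : k < N) (n : ℕ) {x : ℕ} (hx : N ≤ x) : Hb k N n x = 0 := by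
  have hxk : x ≠ k := by omega
  cases n <;> simp [Hb, hxk, hx]

lemma Abb_top {k N : ℕ} (hkN : k < N) (n : ℕ) {x : ℕ} (hx : N ≤ x) : Abb k N n x = 1 := by
  have hxk : x ≠ k := by omega
  cases n <;> simp [Abb, hxk, hx]

lemma Hb_rec (k N n : ℕ) {x : ℕ} (hxk : x ≠ k) (hxN : x < N) :
    Hb k N (n + 1) x = p x * Hb k N n (x + 1) + r x * Hb k N n x + q x * Hb k N n (x - 1) := by
  simp [Hb, hxk, Nat.not_le.mpr hxN]

lemma Abb_rec (k N n : ℕ) {x : ℕ} (hxk : x ≠ k) (hxN : x < N) :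
    Abb k N (n + 1) x = p x * Abb k N n (x + 1) + r x * Abb k N n x + q x * Abb k N n (x - 1) := by
  simp [Abb, hxk, Nat.not_le.mpr hxN]

lemma Hb_le_H (k N : ℕ) : ∀ n x, 1 ≤ x → Hb k N n x ≤ H k n x := by
  intro n
  induction n with
  | zero =>
    intro x _
    simp only [Hb, H]
    exact le_refl _
  | succ n ih =>
    intro x hx
    by_cases hxk : x = k
    · subst hxk; rw [Hb_self, H_self]
    · by_cases hxN : N ≤ x
      · rw [show Hb k N (n+1) x = 0 by simp [Hb, hxk, hxN]]
        exact H_nonneg k (n+1) x hx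
      · rw [Hb_rec k N n hxk (by omega), H_rec k n hxk]
        have h1 : p x * Hb k N n (x+1) ≤ p x * H k n (x+1) :=
          mul_le_mul_of_nonneg_left (ih (x+1) (by omega)) (p_nonneg x)
        have h2 : r x * Hb k N n x ≤ r x * H k n x :=
          mul_le_mul_of_nonneg_left (ih x hx) (r_nonneg x)
        have h3 : q x * Hb k N n (x-1) ≤ q x * H k n (x-1) := by
          rcases Nat.lt_or_ge x 2 with h | h
          · have : x = 1 := by omega
            simp [this, q_one]
          · exact mul_le_mul_of_nonneg_left (ih (x-1) (by omega)) (q_nonneg (by omega))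
        linarith

lemma w_le {k N : ℕ} (hk : 2 ≤ k) (hkN : k + 2 ≤ N) :
    ∀ n x, k ≤ x → (S (min x N) - S N) / (S k - S N) ≤ 1 - Abb k N n x := by
  have hk1 : 1 ≤ k := by omega
  have hD : 0 < S k - S N := by
    have h1 : S N ≤ S (k+1) := S_anti (by omega) (by omega)
    have h2 : S (k+1) < S k := S_succ_lt hk1
    linarith
  have hwle1 : ∀ x, k ≤ x → (S (min x N) - S N) / (S k - S N) ≤ 1 := by
    intro x hx
    rw [div_le_one hD]
    have : S (min x N) ≤ S k := S_anti hk1 (by omega)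
    linarith
  have hwtop : ∀ x, N ≤ x → (S (min x N) - S N) / (S k - S N) = 0 := by
    intro x hx
    rw [min_eq_right hx]
    simp
  have hwk : (S (min k N) - S N) / (S k - S N) = 1 := by
    rw [min_eq_left (by omega), div_self hD.ne']
  intro n
  induction n with
  | zero =>
    intro x hx
    rcases eq_or_lt_of_le hx with hxk | hxk
    · rw [← hxk, hwk, Abb_self]; norm_num
    · by_cases hxN : N ≤ x
      · rw [hwtop x hxN, Abb_top (by omega) 0 hxN]; norm_num
      · have he : Abb k N 0 x = 0 := by simp [Abb, (by omega : ¬ x = k), hxN]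
        rw [he]
        simpa using hwle1 x hx
  | succ n ih =>
    intro x hx
    rcases eq_or_lt_of_le hx with hxk | hxk
    · rw [← hxk, hwk, Abb_self]; norm_num
    · by_cases hxN : N ≤ x
      · rw [hwtop x hxN, Abb_top (by omega) (n+1) hxN]; norm_num
      · have hxN' : x < N := by omega
        rw [Abb_rec k N n (by omega) hxN']
        have e1 : min x N = x := min_eq_left (by omega)
        have e2 : min (x+1) N = x+1 := min_eq_left (by omega)
        have e3 : min (x-1) N = x-1 := min_eq_left (by omega)
        have hharm := S_harm (x := x) (by omega)
        have hsum := pqr_sum x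
        have h1 := mul_le_mul_of_nonneg_left (ih (x+1) (by omega)) (p_nonneg x)
        have h2 := mul_le_mul_of_nonneg_left (ih x hx) (r_nonneg x)
        have h3 := mul_le_mul_of_nonneg_left (ih (x-1) (by omega)) (q_nonneg (by omega : 1 ≤ x))
        rw [e2] at h1
        rw [e1] at h2
        rw [e3] at h3
        rw [mul_sub, mul_one] at h1 h2 h3
        rw [e1]
        have key : (S x - S N)/(S k - S N) =
            p x * ((S (x+1) - S N)/(S k - S N)) + r x * ((S x - S N)/(S k - S N))
              + q x * ((S (x-1) - S N)/(S k - S N)) := by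
          have hnum : p x * (S (x+1) - S N) + r x * (S x - S N) + q x * (S (x-1) - S N)
              = S x - S N := by linear_combination hharm - S N * hsum
          field_simp
          linear_combination -hnum
        rw [key]
        linarith

lemma S_tendsto_zero : Tendsto (fun N : ℕ => S N) atTop (𝓝 0) := by
  apply Filter.Tendsto.inv_tendsto_atTop
  have h : (fun N : ℕ => (N:ℝ)) ≤ᶠ[atTop] fun N : ℕ =>
      (N:ℝ) * ((N:ℝ)+1) * ((N:ℝ)+2) * ((N:ℝ)+3) * (2*(N:ℝ)+3) := by
    filter_upwards [eventually_ge_atTop 1] with N hN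
    have h1 : (1:ℝ) ≤ (N:ℝ) := by exact_mod_cast hN
    have hA : (1:ℝ) ≤ ((N:ℝ)+1) * ((N:ℝ)+2) * ((N:ℝ)+3) * (2*(N:ℝ)+3) := by
      have h2 : (1:ℝ) ≤ ((N:ℝ)+1) * ((N:ℝ)+2) := by nlinarith
      have h3 : (1:ℝ) ≤ ((N:ℝ)+3) * (2*(N:ℝ)+3) := by nlinarith
      nlinarith [mul_le_mul h2 h3 zero_le_one (by nlinarith : (0:ℝ) ≤ ((N:ℝ)+1) * ((N:ℝ)+2))]
    nlinarith [mul_le_mul_of_nonneg_left hA (le_trans zero_le_one h1)]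
  exact tendsto_atTop_mono' atTop h tendsto_natCast_atTop_atTop

/-- Started at `k ≥ 2`, the chain `X̃` returns to `k` (hits `k` at some time `≥ 1`)
with probability `(6k−1)/(3(2k+3))`. The probability of a return within `n+1` steps
is `p_k·H k n (k+1) + r_k·H k n k + q_k·H k n (k−1)`. -/
theorem stmt_6 (k : ℕ) (hk : 2 ≤ k) :
    Tendsto (fun n => p k * H k n (k + 1) + r k * H k n k + q k * H k n (k - 1))
      atTop (𝓝 ((6 * (k : ℝ) - 1) / (3 * (2 * (k : ℝ) + 3)))) := by
  have hk1 : 1 ≤ k := by omega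
  have hSk : 0 < S k := S_pos hk1
  -- limit at k+1
  set L : ℝ := ⨆ n, H k n (k+1) with hLdef
  have hmono1 : Monotone (fun n => H k n (k+1)) :=
    monotone_nat_of_le_succ (fun n => H_mono k n (k+1) (by omega))
  have hbdd1 : BddAbove (Set.range (fun n => H k n (k+1))) :=
    ⟨1, by rintro y ⟨n, rfl⟩; exact H_le_one k n (k+1) (by omega)⟩
  have hT1 : Tendsto (fun n => H k n (k+1)) atTop (𝓝 L) := tendsto_atTop_ciSup hmono1 hbdd1
  have hgk1 : g k (k+1) = S (k+1) / S k := by unfold g; rw [if_neg (by omega)]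
  have hLle : L ≤ S (k+1) / S k :=
    ciSup_le (fun n => hgk1 ▸ H_le_g hk n (k+1) (by omega))
  have hlow : ∀ N, k + 2 ≤ N → (S (k+1) - S N) / (S k - S N) ≤ L := by
    intro N hN
    set u : ℕ → ℕ → ℝ := fun n x => 1 - Hb k N n x - Abb k N n x with hu
    have hqe : q (k+1) = 0 ∨ ∀ n, u n (k+1-1) = 0 := by
      refine Or.inr (fun n => ?_)
      simp only [hu]
      rw [show k+1-1 = k by omega, Hb_self, Abb_self]
      ring
    have hbd : ∀ n, u n N = 0 := by
      intro n
      simp only [hu]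
      rw [Hb_top (by omega) n le_rfl, Abb_top (by omega) n le_rfl]
      ring
    have hrec : ∀ n x, k+1 ≤ x → x < N →
        u (n+1) x = p x * u n (x+1) + r x * u n x + q x * u n (x-1) := by
      intro n x hx1 hx2
      simp only [hu]
      rw [Hb_rec k N n (by omega) hx2, Abb_rec k N n (by omega) hx2]
      linear_combination - pqr_sum x
    have h0 : ∀ x, k+1 ≤ x → x ≤ N → u 0 x ≤ 1 := by
      intro x hx1 hx2
      simp only [hu]
      have h1 : (0:ℝ) ≤ Hb k N 0 x := by simp only [Hb]; split <;> norm_num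
      have h2 : (0:ℝ) ≤ Abb k N 0 x := by
        simp only [Abb]; split
        · norm_num
        · split <;> norm_num
      linarith
    have hcont := contraction u (k+1) N (by omega) (by omega) hqe hbd hrec h0
    set ε := ∏ i ∈ Finset.Ico (k+1) N, p i with hεdef
    have hε0 : 0 < ε := Finset.prod_pos fun i _ => p_pos i
    have hε1 : ε ≤ 1 := Finset.prod_le_one (fun i _ => (p_pos i).le)
      (fun i hi => p_le_one (by have := (Finset.mem_Ico.mp hi).1; omega))
    have hstep : ∀ m : ℕ, (S (k+1) - S N) / (S k - S N) ≤ L + (1-ε)^m := by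
      intro m
      set n := m * (N - (k+1)) with hndef
      have hw := w_le hk hN n (k+1) (by omega)
      rw [min_eq_left (by omega)] at hw
      have hc := hcont m n (k+1) (by omega) (by omega) le_rfl
      have hHb := Hb_le_H k N n (k+1) (by omega)
      have hHL : H k n (k+1) ≤ L := le_ciSup hbdd1 n
      have hdec : 1 - Abb k N n (k+1) = Hb k N n (k+1) + u n (k+1) := by
        simp only [hu]; ring
      linarith
    have hT0 : Tendsto (fun m : ℕ => L + (1-ε)^m) atTop (𝓝 (L + 0)) :=
      tendsto_const_nhds.add
        (tendsto_pow_atTop_nhds_zero_of_lt_one (by linarith) (by linarith))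
    have := ge_of_tendsto hT0 (Filter.Eventually.of_forall hstep)
    simpa using this
  have hLge : S (k+1) / S k ≤ L := by
    have hT : Tendsto (fun N : ℕ => (S (k+1) - S N)/(S k - S N)) atTop
        (𝓝 ((S (k+1) - 0)/(S k - 0))) :=
      (tendsto_const_nhds.sub S_tendsto_zero).div
        (tendsto_const_nhds.sub S_tendsto_zero) (by simpa using hSk.ne')
    have := le_of_tendsto hT (eventually_atTop.mpr ⟨k+2, fun N hN => hlow N hN⟩)
    simpa using this
  have hLeq : L = S (k+1) / S k := le_antisymm hLle hLge
  rw [hLeq] at hT1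
  -- limit at k
  have hT2 : Tendsto (fun n => H k n k) atTop (𝓝 1) := by
    simp only [H_self]
    exact tendsto_const_nhds
  -- limit at k-1
  set L' : ℝ := ⨆ n, H k n (k-1) with hL'def
  have hmono3 : Monotone (fun n => H k n (k-1)) :=
    monotone_nat_of_le_succ (fun n => H_mono k n (k-1) (by omega))
  have hbdd3 : BddAbove (Set.range (fun n => H k n (k-1))) :=
    ⟨1, by rintro y ⟨n, rfl⟩; exact H_le_one k n (k-1) (by omega)⟩
  have hT3 : Tendsto (fun n => H k n (k-1)) atTop (𝓝 L') := tendsto_atTop_ciSup hmono3 hbdd3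
  have hL'le : L' ≤ 1 := ciSup_le (fun n => H_le_one k n (k-1) (by omega))
  have hL'ge : 1 ≤ L' := by
    set u : ℕ → ℕ → ℝ := fun n x => 1 - H k n x with hu
    have hqe : q 1 = 0 ∨ ∀ n, u n (1-1) = 0 := Or.inl q_one
    have hbd : ∀ n, u n k = 0 := by
      intro n; simp only [hu]; rw [H_self]; ring
    have hrec : ∀ n x, 1 ≤ x → x < k →
        u (n+1) x = p x * u n (x+1) + r x * u n x + q x * u n (x-1) := by
      intro n x hx1 hx2
      simp only [hu]
      rw [H_rec k n (by omega)]
      linear_combination - pqr_sum x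
    have h0 : ∀ x, 1 ≤ x → x ≤ k → u 0 x ≤ 1 := by
      intro x hx1 hx2
      simp only [hu]
      linarith [H_zero_nonneg k x]
    have hcont := contraction u 1 k (le_refl 1) (by omega) hqe hbd hrec h0
    set ε := ∏ i ∈ Finset.Ico 1 k, p i with hεdef
    have hε0 : 0 < ε := Finset.prod_pos fun i _ => p_pos i
    have hε1 : ε ≤ 1 := Finset.prod_le_one (fun i _ => (p_pos i).le)
      (fun i hi => p_le_one (Finset.mem_Ico.mp hi).1)
    have hstep : ∀ m : ℕ, 1 - (1-ε)^m ≤ L' := by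
      intro m
      have hc := hcont m (m * (k - 1)) (k-1) (by omega) (by omega) le_rfl
      have hHL : H k (m * (k-1)) (k-1) ≤ L' := le_ciSup hbdd3 (m * (k-1))
      simp only [hu] at hc
      linarith
    have hT0 : Tendsto (fun m : ℕ => 1 - (1-ε)^m) atTop (𝓝 (1 - 0)) :=
      tendsto_const_nhds.sub
        (tendsto_pow_atTop_nhds_zero_of_lt_one (by linarith) (by linarith))
    have := le_of_tendsto hT0 (Filter.Eventually.of_forall hstep)
    simpa using this
  have hL'eq : L' = 1 := le_antisymm hL'le hL'ge
  rw [hL'eq] at hT3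
  -- combine
  have Tcomb := ((hT1.const_mul (p k)).add (hT2.const_mul (r k))).add (hT3.const_mul (q k))
  have hval : (6 * (k:ℝ) - 1) / (3 * (2 * (k:ℝ) + 3))
      = p k * (S (k+1) / S k) + r k * 1 + q k * 1 := by
    have hk0 : (0:ℝ) < (k:ℝ) := by exact_mod_cast (by omega : 0 < k)
    unfold p q r S
    push_cast
    field_simp
    ring
  rw [hval]
  exact Tcomb
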